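/- If M is a principally δ-semiperfect right R-module, then M is principally δ-supplemented; that is, for every m ∈ M there exists a submodule L of M with M = mR + L and mR ∩ L δ-small in L. -/

import Mathlib

/-- A submodule `K` of `M` is *essential* in `M` if it has nonzero intersection with
every nonzero submodule of `M`. -/
def IsEssentialSubmodule {R M : Type*} [Ring R] [AddCommGroup M] [Module R M]
    (K : Submodule R M) : Prop :=
  ∀ N : Submodule R M, N ≠ ⊥ → K ⊓ N ≠ ⊥

/-- A module `M` is *singular* if the annihilator of every element of `M` is an
essential ideal of `R`. -/
def IsSingularModule (R M : Type*) [Ring R] [AddCommGroup M] [Module R M] : Prop :=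
  ∀ x : M, IsEssentialSubmodule (LinearMap.ker (LinearMap.toSpanSingleton R M x))

/-- A submodule `N` of `M` is *δ-small* in `M` if whenever `M = N + X` with `M/X`
singular, we have `X = M`. -/
def IsDeltaSmall (R : Type*) {M : Type*} [Ring R] [AddCommGroup M] [Module R M]
    (N : Submodule R M) : Prop :=
  ∀ X : Submodule R M, N ⊔ X = ⊤ → IsSingularModule R (M ⧸ X) → X = ⊤

universe uR uX uP

/-- A *projective δ-cover* of a module `X`: a projective module `P` together with a
surjective homomorphism `f : P → X` whose kernel is δ-small in `P`. -/
structure ProjectiveDeltaCover (R : Type uR) (X : Type uX) [Ring R]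
    [AddCommGroup X] [Module R X] : Type (max uR uX (uP + 1)) where
  P : Type uP
  [addCommGroup : AddCommGroup P]
  [module : Module R P]
  projective : Module.Projective R P
  f : P →ₗ[R] X
  surjective : Function.Surjective f
  ker_deltaSmall : IsDeltaSmall R (LinearMap.ker f)

/-- A module `M` is *principally δ-semiperfect* if for each `m ∈ M` the factor module
`M/mR` has a projective δ-cover. -/
def IsPrinDeltaSemiperfect (R : Type uR) (M : Type uX) [Ring R] [AddCommGroup M]
    [Module R M] : Prop :=
  ∀ m : M, Nonempty (ProjectiveDeltaCover.{uR, uX, uP} R (M ⧸ Submodule.span R {m}))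

/-!
Lift the cover `f : P → M/N` through `M → M/N` to `g : P → M` by projectivity. Then
`L = g(P)` satisfies `N + L = M` because `f` is onto, and `N ∩ L = g(ker f)` because
`ker f = g⁻¹(N)`; images of δ-small submodules are δ-small, so `N ∩ L` is δ-small in `L`.
-/

def IsDeltaSupplement {R M : Type*} [Ring R] [AddCommGroup M] [Module R M]
    (N L : Submodule R M) : Prop :=
  N ⊔ L = ⊤ ∧ IsDeltaSmall R ((N ⊓ L).comap L.subtype)

theorem IsSingularModule.of_injective {R A B : Type*} [Ring R] [AddCommGroup A] [Module R A]
    [AddCommGroup B] [Module R B] {φ : A →ₗ[R] B} (hφ : Function.Injective φ)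
    (hB : IsSingularModule R B) : IsSingularModule R A := by
  intro x
  have hker : LinearMap.ker (LinearMap.toSpanSingleton R A x)
      = LinearMap.ker (LinearMap.toSpanSingleton R B (φ x)) := by
    ext r
    simp only [LinearMap.mem_ker, LinearMap.toSpanSingleton_apply, ← map_smul,
      map_eq_zero_iff φ hφ]
  rw [hker]
  exact hB (φ x)

theorem IsDeltaSmall.map {R P L : Type*} [Ring R] [AddCommGroup P] [Module R P]
    [AddCommGroup L] [Module R L] {K : Submodule R P} (hK : IsDeltaSmall R K)
    (h : P →ₗ[R] L) : IsDeltaSmall R (K.map h) := by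
  intro X hKX hX
  have hker : LinearMap.ker (X.mkQ ∘ₗ h) = X.comap h := by
    ext p
    simp
  have hsingular : IsSingularModule R (P ⧸ X.comap h) := by
    refine IsSingularModule.of_injective (φ := (X.comap h).liftQ (X.mkQ ∘ₗ h) hker.ge) ?_ hX
    rw [← LinearMap.ker_eq_bot, Submodule.ker_liftQ_eq_bot]
    exact hker.le
  have hsup : K ⊔ X.comap h = ⊤ := by
    rw [eq_top_iff]
    intro p _
    obtain ⟨_, ⟨k, hk, rfl⟩, x, hx, hkx⟩ :=
      Submodule.mem_sup.mp (hKX ▸ Submodule.mem_top : h p ∈ K.map h ⊔ X)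
    refine Submodule.mem_sup.mpr ⟨k, hk, p - k, ?_, by abel⟩
    rw [Submodule.mem_comap, map_sub, ← hkx, add_sub_cancel_left]
    exact hx
  have hrange : K.map h ≤ X :=
    Submodule.map_le_iff_le_comap.mpr ((hK _ hsup hsingular).symm ▸ le_top)
  rwa [sup_eq_right.mpr hrange] at hKX

theorem isDeltaSupplement_range_of_mkQ_comp_eq {R M P : Type*} [Ring R] [AddCommGroup M]
    [Module R M] [AddCommGroup P] [Module R P] {N : Submodule R M} {f : P →ₗ[R] M ⧸ N}
    (hf : Function.Surjective f) (hker : IsDeltaSmall R (LinearMap.ker f))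
    {g : P →ₗ[R] M} (hgf : N.mkQ ∘ₗ g = f) : IsDeltaSupplement N (LinearMap.range g) := by
  have hker_eq : LinearMap.ker f = N.comap g := by
    rw [← hgf, LinearMap.ker_comp, Submodule.ker_mkQ]
  constructor
  · rw [eq_top_iff]
    intro x _
    obtain ⟨p, hp⟩ := hf (N.mkQ x)
    refine Submodule.mem_sup.mpr ⟨x - g p, ?_, g p, ⟨p, rfl⟩, sub_add_cancel x (g p)⟩
    rw [← Submodule.ker_mkQ N, LinearMap.mem_ker, map_sub, ← LinearMap.comp_apply, hgf, hp,
      sub_self]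
  · have hinf : (N ⊓ LinearMap.range g).comap (LinearMap.range g).subtype
        = (LinearMap.ker f).map g.rangeRestrict := by
      rw [hker_eq, Submodule.comap_inf, Submodule.comap_subtype_self, inf_top_eq,
        ← Submodule.map_comap_eq_of_surjective g.surjective_rangeRestrict
          (N.comap (LinearMap.range g).subtype),
        ← Submodule.comap_comp]
      rfl
    rw [hinf]
    exact hker.map _

theorem ProjectiveDeltaCover.exists_isDeltaSupplement {R : Type uR} {M : Type uX} [Ring R]
    [AddCommGroup M] [Module R M] {N : Submodule R M}
    (C : ProjectiveDeltaCover.{uR, uX, uP} R (M ⧸ N)) :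
    ∃ L : Submodule R M, IsDeltaSupplement N L := by
  let _ := C.addCommGroup
  let _ := C.module
  have _ := C.projective
  obtain ⟨g, hgf⟩ := Module.projective_lifting_property N.mkQ C.f N.mkQ_surjective
  exact ⟨_, isDeltaSupplement_range_of_mkQ_comp_eq C.surjective C.ker_deltaSmall hgf⟩

theorem isPrinDeltaSupplemented_of_isPrinDeltaSemiperfect
    {R : Type uR} {M : Type uX} [Ring R] [AddCommGroup M] [Module R M]
    (hM : IsPrinDeltaSemiperfect.{uR, uX, uP} R M) :
    ∀ m : M, ∃ L : Submodule R M, Submodule.span R {m} ⊔ L = ⊤ ∧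
      IsDeltaSmall R ((Submodule.span R {m} ⊓ L).comap L.subtype) := by
  intro m
  obtain ⟨C⟩ := hM m
  exact C.exists_isDeltaSupplement
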